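/- (Theorem 2(C).) Let Δ = 3π/4 or Δ = −π/4, let Ũ be the 4-state LQW time evolution with coin matrix M̃(Δ), and let the initial state be ψ₀(x) = (φ₁, φ₂, φ₃, φ₄)ᵀ·δ₀(x). Set j = 0 if Δ = −π/4 and j = 1 if Δ = 3π/4. Then for every even n ≥ 0 and x ∈ ℤ: (Ũⁿψ₀)(x) = (1/2)(φ₁−φ₃, 0, φ₃−φ₁, 0)ᵀ δ₋ₙ(x) + (1/2)(φ₁+φ₃, φ₂+φ₄, φ₁+φ₃, φ₂+φ₄)ᵀ δ₀(x) + (1/2)(0, φ₂−φ₄, 0, φ₄−φ₂)ᵀ δₙ(x); and for every odd n ≥ 1 and x ∈ ℤ: (Ũⁿψ₀)(x) = (−1)^j·{ (1/2)(φ₁−φ₃, 0, φ₃−φ₁, 0)ᵀ δ₋ₙ(x) − (1/2)(φ₂+φ₄, 0, φ₂+φ₄, 0)ᵀ δ₋₁(x) − (1/2)(0, φ₁+φ₃, 0, φ₁+φ₃)ᵀ δ₁(x) + (1/2)(0, φ₂−φ₄, 0, φ₄−φ₂)ᵀ δₙ(x) }. -/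

import Mathlib

open Matrix Real

noncomputable section

/-- The coin matrix `M̃(Δ)` of the one-parameter family of 4-state Grover walks. -/
def MtildeGrover (Δ : ℝ) : Matrix (Fin 4) (Fin 4) ℂ :=
  ((Real.sqrt 2)⁻¹ : ℂ) •
    !![(Real.cos Δ : ℂ), (Real.sin Δ : ℂ), -(Real.cos Δ : ℂ), (Real.sin Δ : ℂ);
       (Real.sin Δ : ℂ), (Real.cos Δ : ℂ), (Real.sin Δ : ℂ), -(Real.cos Δ : ℂ);
       (Real.sin Δ : ℂ), -(Real.cos Δ : ℂ), -(Real.sin Δ : ℂ), -(Real.cos Δ : ℂ);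
       -(Real.cos Δ : ℂ), (Real.sin Δ : ℂ), -(Real.cos Δ : ℂ), -(Real.sin Δ : ℂ)]

/-- The time evolution of the 4-state LQW on `ℤ` with coin matrix `M`:
`(Ũψ)(x) = P̃·ψ(x+1) + Q̃·ψ(x−1)` where `P̃` retains rows 1 and 3 of `M` and `Q̃` retains
rows 2 and 4. -/
def lqwU4 (M : Matrix (Fin 4) (Fin 4) ℂ) (ψ : ℤ → Fin 4 → ℂ) : ℤ → Fin 4 → ℂ := fun x =>
  (Matrix.of ![M 0, (0 : Fin 4 → ℂ), M 2, (0 : Fin 4 → ℂ)]).mulVec (ψ (x + 1))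
    + (Matrix.of ![(0 : Fin 4 → ℂ), M 1, (0 : Fin 4 → ℂ), M 3]).mulVec (ψ (x - 1))

/-- `δ_{x₀}(x)`: `1` if `x = x₀` and `0` otherwise. -/
def dlt (x₀ x : ℤ) : ℂ := if x = x₀ then 1 else 0

/-!
At `Δ = 3π/4` the coin is the Grover matrix `G`, and `M̃(Δ + π) = -M̃(Δ)` makes the coin at
`Δ = -π/4` equal to `-G`; negating the coin multiplies `Ũⁿ` by `(-1)ⁿ`, which accounts for the
sign `(-1)^j`. For the coin `-G` the initial vector splits as `½((a,0,-a,0) + (p,q,p,q) + (0,b,0,-b))`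
with `a = φ₁ - φ₃`, `b = φ₂ - φ₄`, `p = φ₁ + φ₃`, `q = φ₂ + φ₄`: the first summand is fixed by `P̃` and
killed by `Q̃`, so it travels ballistically to the left, the last one likewise to the right, and the
middle one is a bound state that hops to the sites `±1` and back with period two.
-/

def grover4 : Matrix (Fin 4) (Fin 4) ℂ :=
  !![-1/2, 1/2, 1/2, 1/2; 1/2, -1/2, 1/2, 1/2; 1/2, 1/2, -1/2, 1/2; 1/2, 1/2, 1/2, -1/2]

lemma MtildeGrover_add_pi (Δ : ℝ) : MtildeGrover (Δ + π) = -MtildeGrover Δ := by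
  ext i j
  fin_cases i <;> fin_cases j <;> simp [MtildeGrover, Real.cos_add_pi, Real.sin_add_pi]

lemma MtildeGrover_neg_pi_div_four : MtildeGrover (-π / 4) = -grover4 := by
  have hcos : Real.cos (-π / 4) = Real.sqrt 2 / 2 := by
    rw [neg_div, Real.cos_neg, Real.cos_pi_div_four]
  have hsin : Real.sin (-π / 4) = -(Real.sqrt 2 / 2) := by
    rw [neg_div, Real.sin_neg, Real.sin_pi_div_four]
  have hsqrt : (Real.sqrt 2 : ℂ) ≠ 0 := by exact_mod_cast (Real.sqrt_pos.2 two_pos).ne'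
  ext i j
  fin_cases i <;> fin_cases j <;> simp [MtildeGrover, grover4, hcos, hsin] <;> field_simp

lemma MtildeGrover_three_pi_div_four : MtildeGrover (3 * π / 4) = grover4 := by
  rw [show 3 * π / 4 = -π / 4 + π by ring, MtildeGrover_add_pi, MtildeGrover_neg_pi_div_four,
    neg_neg]

section Walk

variable (M : Matrix (Fin 4) (Fin 4) ℂ)

def lqwP : Matrix (Fin 4) (Fin 4) ℂ := Matrix.of ![M 0, 0, M 2, 0]

def lqwQ : Matrix (Fin 4) (Fin 4) ℂ := Matrix.of ![0, M 1, 0, M 3]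

lemma lqwP_neg : lqwP (-M) = -lqwP M := by
  ext i j
  fin_cases i <;> simp [lqwP]

lemma lqwQ_neg : lqwQ (-M) = -lqwQ M := by
  ext i j
  fin_cases i <;> simp [lqwQ]

lemma lqwU4_apply (ψ : ℤ → Fin 4 → ℂ) (x : ℤ) :
    lqwU4 M ψ x = lqwP M *ᵥ ψ (x + 1) + lqwQ M *ᵥ ψ (x - 1) :=
  rfl

def lqwLinear : Module.End ℂ (ℤ → Fin 4 → ℂ) where
  toFun := lqwU4 M
  map_add' ψ φ := by
    funext x
    simp only [lqwU4_apply, Pi.add_apply, mulVec_add]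
    abel
  map_smul' c ψ := by
    funext x
    simp only [lqwU4_apply, Pi.smul_apply, mulVec_smul, RingHom.id_apply, smul_add]

lemma iterate_lqwU4_eq_pow (n : ℕ) : (lqwU4 M)^[n] = ⇑(lqwLinear M ^ n) :=
  (Module.End.coe_pow (lqwLinear M) n).symm

lemma lqwLinear_neg : lqwLinear (-M) = -lqwLinear M := by
  ext ψ x : 2
  simp only [lqwLinear, LinearMap.coe_mk, AddHom.coe_mk, LinearMap.neg_apply, Pi.neg_apply,
    lqwU4_apply, lqwP_neg, lqwQ_neg, neg_mulVec, neg_add]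

lemma lqwLinear_single (y : ℤ) (v : Fin 4 → ℂ) :
    lqwLinear M (Pi.single y v) =
      Pi.single (y - 1) (lqwP M *ᵥ v) + Pi.single (y + 1) (lqwQ M *ᵥ v) := by
  funext x
  simp only [lqwLinear, LinearMap.coe_mk, AddHom.coe_mk, lqwU4_apply, Pi.add_apply,
    Pi.single_apply, eq_sub_iff_add_eq, sub_eq_iff_eq_add]
  split_ifs <;> simp

end Walk

lemma lqwLinear_neg_grover4_single (y : ℤ) (p q r s : ℂ) :
    lqwLinear (-grover4) (Pi.single y ![p, q, r, s]) =
      Pi.single (y - 1) ![(p - q - r - s) / 2, 0, (r - p - q - s) / 2, 0]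
        + Pi.single (y + 1) ![0, (q - p - r - s) / 2, 0, (s - p - q - r) / 2] := by
  rw [lqwLinear_single]
  congr 2 <;> ext i <;> fin_cases i <;>
    simp [lqwP, lqwQ, grover4, mulVec, dotProduct, Fin.sum_univ_four] <;> ring

lemma lqwLinear_neg_grover4_single_left (y : ℤ) (a : ℂ) :
    lqwLinear (-grover4) (Pi.single y ![a, 0, -a, 0]) = Pi.single (y - 1) ![a, 0, -a, 0] := by
  rw [lqwLinear_neg_grover4_single]
  ring_nf
  simp

lemma lqwLinear_neg_grover4_single_right (y : ℤ) (b : ℂ) :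
    lqwLinear (-grover4) (Pi.single y ![0, b, 0, -b]) = Pi.single (y + 1) ![0, b, 0, -b] := by
  rw [lqwLinear_neg_grover4_single]
  ring_nf
  simp

lemma lqwLinear_neg_grover4_single_bound (y : ℤ) (p q : ℂ) :
    lqwLinear (-grover4) (Pi.single y ![p, q, p, q]) =
      -Pi.single (y - 1) ![q, 0, q, 0] - Pi.single (y + 1) ![0, p, 0, p] := by
  rw [lqwLinear_neg_grover4_single, ← Pi.single_neg, sub_eq_add_neg (Pi.single _ _),
    ← Pi.single_neg]
  ring_nf
  simp

lemma lqwLinear_neg_grover4_apply_apply_single_bound (y : ℤ) (p q : ℂ) :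
    lqwLinear (-grover4) (lqwLinear (-grover4) (Pi.single y ![p, q, p, q])) =
      Pi.single y ![p, q, p, q] := by
  rw [lqwLinear_neg_grover4_single_bound, map_sub, map_neg, lqwLinear_neg_grover4_single,
    lqwLinear_neg_grover4_single]
  ring_nf
  simp [← Matrix.zero_empty, ← Pi.single_neg, ← Pi.single_sub]

lemma lqwLinear_neg_grover4_pow_single_left (n : ℕ) (y : ℤ) (a : ℂ) :
    (lqwLinear (-grover4) ^ n) (Pi.single y ![a, 0, -a, 0]) =
      Pi.single (y - n) ![a, 0, -a, 0] := by
  induction n with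
  | zero => simp
  | succ n ih =>
    rw [pow_succ', Module.End.mul_apply, ih, lqwLinear_neg_grover4_single_left]
    push_cast
    ring_nf

lemma lqwLinear_neg_grover4_pow_single_right (n : ℕ) (y : ℤ) (b : ℂ) :
    (lqwLinear (-grover4) ^ n) (Pi.single y ![0, b, 0, -b]) =
      Pi.single (y + n) ![0, b, 0, -b] := by
  induction n with
  | zero => simp
  | succ n ih =>
    rw [pow_succ', Module.End.mul_apply, ih, lqwLinear_neg_grover4_single_right]
    push_cast
    ring_nf

lemma lqwLinear_neg_grover4_pow_even_single_bound (m : ℕ) (y : ℤ) (p q : ℂ) :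
    (lqwLinear (-grover4) ^ (2 * m)) (Pi.single y ![p, q, p, q]) = Pi.single y ![p, q, p, q] := by
  rw [pow_mul, Module.End.pow_apply]
  exact Function.iterate_fixed (lqwLinear_neg_grover4_apply_apply_single_bound y p q) m

lemma lqwLinear_neg_grover4_pow_odd_single_bound (m : ℕ) (y : ℤ) (p q : ℂ) :
    (lqwLinear (-grover4) ^ (2 * m + 1)) (Pi.single y ![p, q, p, q]) =
      -Pi.single (y - 1) ![q, 0, q, 0] - Pi.single (y + 1) ![0, p, 0, p] := by
  rw [pow_succ', Module.End.mul_apply, lqwLinear_neg_grover4_pow_even_single_bound,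
    lqwLinear_neg_grover4_single_bound]

lemma single_zero_eq_half_smul_left_add_bound_add_right (φ₁ φ₂ φ₃ φ₄ : ℂ) :
    (Pi.single 0 ![φ₁, φ₂, φ₃, φ₄] : ℤ → Fin 4 → ℂ) = (1 / 2 : ℂ) •
      (Pi.single 0 ![φ₁ - φ₃, 0, -(φ₁ - φ₃), 0] + Pi.single 0 ![φ₁ + φ₃, φ₂ + φ₄, φ₁ + φ₃, φ₂ + φ₄]
        + Pi.single 0 ![0, φ₂ - φ₄, 0, -(φ₂ - φ₄)]) := by
  rw [← Pi.single_add, ← Pi.single_add, ← Pi.single_smul]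
  congr 1
  ext i
  fin_cases i <;> simp <;> ring

lemma lqwLinear_neg_grover4_pow_single_zero_of_even (n : ℕ) (hn : Even n) (φ₁ φ₂ φ₃ φ₄ : ℂ) :
    (lqwLinear (-grover4) ^ n) (Pi.single 0 ![φ₁, φ₂, φ₃, φ₄]) = (1 / 2 : ℂ) •
      (Pi.single (-(n : ℤ)) ![φ₁ - φ₃, 0, φ₃ - φ₁, 0]
        + Pi.single 0 ![φ₁ + φ₃, φ₂ + φ₄, φ₁ + φ₃, φ₂ + φ₄]
        + Pi.single (n : ℤ) ![0, φ₂ - φ₄, 0, φ₄ - φ₂] : ℤ → Fin 4 → ℂ) := by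
  obtain ⟨m, rfl⟩ := hn
  rw [single_zero_eq_half_smul_left_add_bound_add_right, map_smul, map_add, map_add,
    lqwLinear_neg_grover4_pow_single_left, lqwLinear_neg_grover4_pow_single_right, ← two_mul,
    lqwLinear_neg_grover4_pow_even_single_bound, neg_sub, neg_sub, zero_sub, zero_add]

lemma lqwLinear_neg_grover4_pow_single_zero_of_odd (n : ℕ) (hn : Odd n) (φ₁ φ₂ φ₃ φ₄ : ℂ) :
    (lqwLinear (-grover4) ^ n) (Pi.single 0 ![φ₁, φ₂, φ₃, φ₄]) = (1 / 2 : ℂ) •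
      (Pi.single (-(n : ℤ)) ![φ₁ - φ₃, 0, φ₃ - φ₁, 0] - Pi.single (-1) ![φ₂ + φ₄, 0, φ₂ + φ₄, 0]
        - Pi.single 1 ![0, φ₁ + φ₃, 0, φ₁ + φ₃]
        + Pi.single (n : ℤ) ![0, φ₂ - φ₄, 0, φ₄ - φ₂] : ℤ → Fin 4 → ℂ) := by
  obtain ⟨m, rfl⟩ := hn
  rw [single_zero_eq_half_smul_left_add_bound_add_right, map_smul, map_add, map_add,
    lqwLinear_neg_grover4_pow_single_left, lqwLinear_neg_grover4_pow_single_right,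
    lqwLinear_neg_grover4_pow_odd_single_bound, neg_sub, neg_sub, zero_sub, zero_add, zero_sub,
    zero_add]
  congr 1
  abel

lemma dlt_smul_eq_single_apply (y x : ℤ) (v : Fin 4 → ℂ) :
    dlt y x • v = (Pi.single y v : ℤ → Fin 4 → ℂ) x := by
  simp [dlt, Pi.single_apply, ite_smul]

/-- Theorem 2(C): for `Δ = −π/4` (`j = 0`) or `Δ = 3π/4` (`j = 1`), explicit expressions for
the quantum state of the 4-state walk with initial state `(φ₁,φ₂,φ₃,φ₄)ᵀδ₀(x)`, at even and
odd times. -/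
theorem grover_walk_case_C_states (Δ : ℝ) (j : ℕ)
    (hΔ : (Δ = -π / 4 ∧ j = 0) ∨ (Δ = 3 * π / 4 ∧ j = 1))
    (φ₁ φ₂ φ₃ φ₄ : ℂ) :
    (∀ n : ℕ, Even n → ∀ x : ℤ,
      ((lqwU4 (MtildeGrover Δ))^[n]
          (fun z => if z = 0 then ![φ₁, φ₂, φ₃, φ₄] else 0)) x
        = (1 / 2 : ℂ) •
            (dlt (-(n : ℤ)) x • ![φ₁ - φ₃, 0, φ₃ - φ₁, 0]
              + dlt 0 x • ![φ₁ + φ₃, φ₂ + φ₄, φ₁ + φ₃, φ₂ + φ₄]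
              + dlt (n : ℤ) x • ![0, φ₂ - φ₄, 0, φ₄ - φ₂])) ∧
    (∀ n : ℕ, Odd n → ∀ x : ℤ,
      ((lqwU4 (MtildeGrover Δ))^[n]
          (fun z => if z = 0 then ![φ₁, φ₂, φ₃, φ₄] else 0)) x
        = ((-1) ^ j / 2 : ℂ) •
            (dlt (-(n : ℤ)) x • ![φ₁ - φ₃, 0, φ₃ - φ₁, 0]
              - dlt (-1) x • ![φ₂ + φ₄, 0, φ₂ + φ₄, 0]
              - dlt 1 x • ![0, φ₁ + φ₃, 0, φ₁ + φ₃]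
              + dlt (n : ℤ) x • ![0, φ₂ - φ₄, 0, φ₄ - φ₂])) := by
  have hcoin : lqwLinear (MtildeGrover Δ) = ((-1 : ℂ) ^ j) • lqwLinear (-grover4) := by
    rcases hΔ with ⟨rfl, rfl⟩ | ⟨rfl, rfl⟩
    · rw [MtildeGrover_neg_pi_div_four, pow_zero, one_smul]
    · rw [MtildeGrover_three_pi_div_four, pow_one, lqwLinear_neg]
      simp
  have hψ₀ : (fun z : ℤ => if z = 0 then ![φ₁, φ₂, φ₃, φ₄] else 0) =
      Pi.single 0 ![φ₁, φ₂, φ₃, φ₄] :=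
    funext fun z => (Pi.single_apply 0 _ z).symm
  have hiter (n : ℕ) : (lqwU4 (MtildeGrover Δ))^[n] (Pi.single 0 ![φ₁, φ₂, φ₃, φ₄]) =
      ((-1 : ℂ) ^ n) ^ j • (lqwLinear (-grover4) ^ n) (Pi.single 0 ![φ₁, φ₂, φ₃, φ₄]) := by
    rw [iterate_lqwU4_eq_pow, hcoin, smul_pow, ← pow_mul, mul_comm, pow_mul]
    rfl
  simp only [hψ₀, hiter, dlt_smul_eq_single_apply]
  refine ⟨fun n hn x => ?_, fun n hn x => ?_⟩
  · rw [hn.neg_one_pow, one_pow, one_smul, lqwLinear_neg_grover4_pow_single_zero_of_even n hn]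
    rfl
  · rw [hn.neg_one_pow, lqwLinear_neg_grover4_pow_single_zero_of_odd n hn, smul_smul, mul_one_div]
    rfl

end
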